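/- Let q, r be Schwartz and let P = [[-2iϰ⁴ - iϰ²qr, 2ϰ³q + iϰq' + ϰq²r],[2ϰ³r - iϰr' + ϰqr², 2iϰ⁴ + iϰ²qr]] and L(ϰ) = [[∂+iϰ², -ϰq],[-ϰr, ∂-iϰ²]]. If q and r evolve by dq/dt = iq'' + (q²r)' and dr/dt = -ir'' + (qr²)', then dL(ϰ)/dt = [P, L(ϰ)] as operators (equivalently, as an identity of matrix-valued differential expressions). -/
import Mathlib


open Complex Matrix

/-- The zeroth-order part of the Lax operator `L(ϰ) = ∂·I + A`, with
`A = [[iϰ², -ϰq],[-ϰr, -iϰ²]]`. -/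
noncomputable def laxA (ϰ : ℂ) (q r : ℝ → ℝ → ℂ) (t x : ℝ) : Matrix (Fin 2) (Fin 2) ℂ :=
  Matrix.of ![![Complex.I * ϰ ^ 2, -ϰ * q t x], ![-ϰ * r t x, -Complex.I * ϰ ^ 2]]

/-- The matrix `P` of the Kaup–Newell Lax pair for DNLS. -/
noncomputable def laxP (ϰ : ℂ) (q r qx rx : ℝ → ℝ → ℂ) (t x : ℝ) :
    Matrix (Fin 2) (Fin 2) ℂ :=
  Matrix.of
    ![![-2 * Complex.I * ϰ ^ 4 - Complex.I * ϰ ^ 2 * q t x * r t x,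
        2 * ϰ ^ 3 * q t x + Complex.I * ϰ * qx t x + ϰ * (q t x) ^ 2 * r t x],
      ![2 * ϰ ^ 3 * r t x - Complex.I * ϰ * rx t x + ϰ * q t x * (r t x) ^ 2,
        2 * Complex.I * ϰ ^ 4 + Complex.I * ϰ ^ 2 * q t x * r t x]]

/-- Kaup–Newell Lax pair for DNLS: if `q, r` evolve by `q_t = iq'' + (q²r)'`,
`r_t = -ir'' + (qr²)'`, then `dL(ϰ)/dt = [P, L(ϰ)]` as matrix-valued differential
expressions; since `[P, ∂·I] = -∂ₓP`, this reads `∂ₜA = P·A - A·P - ∂ₓP`. -/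
theorem kaup_newell_lax_pair
    (q r qx qxx rx rxx : ℝ → ℝ → ℂ) (ϰ : ℂ)
    (hiϰ : (Complex.I * ϰ ^ 2).im = 0)
    (hr : ∀ t x, r t x = -(starRingEnd ℂ) (q t x))
    (hqx : ∀ t x, HasDerivAt (fun y => q t y) (qx t x) x)
    (hqxx : ∀ t x, HasDerivAt (fun y => qx t y) (qxx t x) x)
    (hrx : ∀ t x, HasDerivAt (fun y => r t y) (rx t x) x)
    (hrxx : ∀ t x, HasDerivAt (fun y => rx t y) (rxx t x) x)
    (htq : ∀ t x, HasDerivAt (fun τ => q τ x)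
      (Complex.I * qxx t x + (2 * q t x * qx t x * r t x + (q t x) ^ 2 * rx t x)) t)
    (htr : ∀ t x, HasDerivAt (fun τ => r τ x)
      (-Complex.I * rxx t x + (qx t x * (r t x) ^ 2 + 2 * q t x * r t x * rx t x)) t) :
    ∀ t x : ℝ,
      (Matrix.of fun i j => deriv (fun τ => laxA ϰ q r τ x i j) t) =
        laxP ϰ q r qx rx t x * laxA ϰ q r t x - laxA ϰ q r t x * laxP ϰ q r qx rx t x -
          Matrix.of fun i j => deriv (fun y => laxP ϰ q r qx rx t y i j) x := by
  intro t x
  have hA00 : deriv (fun τ => laxA ϰ q r τ x 0 0) t = 0 := by simp [laxA]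
  have hA11 : deriv (fun τ => laxA ϰ q r τ x 1 1) t = 0 := by simp [laxA]
  have hA01 : deriv (fun τ => laxA ϰ q r τ x 0 1) t =
      -ϰ * (Complex.I * qxx t x + (2 * q t x * qx t x * r t x + (q t x) ^ 2 * rx t x)) := by
    have e : (fun τ => laxA ϰ q r τ x 0 1) = fun τ => -ϰ * q τ x := by
      funext τ; simp [laxA]
    rw [e]; exact (((htq t x).const_mul (-ϰ))).deriv
  have hA10 : deriv (fun τ => laxA ϰ q r τ x 1 0) t =
      -ϰ * (-Complex.I * rxx t x + (qx t x * (r t x) ^ 2 + 2 * q t x * r t x * rx t x)) := by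
    have e : (fun τ => laxA ϰ q r τ x 1 0) = fun τ => -ϰ * r τ x := by
      funext τ; simp [laxA]
    rw [e]; exact (((htr t x).const_mul (-ϰ))).deriv
  have hP00 : deriv (fun y => laxP ϰ q r qx rx t y 0 0) x =
      -(Complex.I * ϰ ^ 2) * (qx t x * r t x + q t x * rx t x) := by
    have e : (fun y => laxP ϰ q r qx rx t y 0 0) =
        fun y => -2 * Complex.I * ϰ ^ 4 + -(Complex.I * ϰ ^ 2) * (q t y * r t y) := by
      funext y; simp [laxP]; ring
    rw [e]
    exact ((((hqx t x).mul (hrx t x)).const_mul (-(Complex.I * ϰ ^ 2))).const_add _).deriv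
  have hP11 : deriv (fun y => laxP ϰ q r qx rx t y 1 1) x =
      (Complex.I * ϰ ^ 2) * (qx t x * r t x + q t x * rx t x) := by
    have e : (fun y => laxP ϰ q r qx rx t y 1 1) =
        fun y => 2 * Complex.I * ϰ ^ 4 + (Complex.I * ϰ ^ 2) * (q t y * r t y) := by
      funext y; simp [laxP]; ring
    rw [e]
    exact ((((hqx t x).mul (hrx t x)).const_mul (Complex.I * ϰ ^ 2)).const_add _).deriv
  have hP01 : deriv (fun y => laxP ϰ q r qx rx t y 0 1) x =
      2 * ϰ ^ 3 * qx t x + Complex.I * ϰ * qxx t x +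
        ϰ * ((qx t x * q t x + q t x * qx t x) * r t x + q t x * q t x * rx t x) := by
    have e : (fun y => laxP ϰ q r qx rx t y 0 1) =
        fun y => 2 * ϰ ^ 3 * q t y + Complex.I * ϰ * qx t y + ϰ * (q t y * q t y * r t y) := by
      funext y; simp [laxP]; ring
    rw [e]
    exact ((((hqx t x).const_mul (2 * ϰ ^ 3)).add ((hqxx t x).const_mul (Complex.I * ϰ))).add
      ((((hqx t x).mul (hqx t x)).mul (hrx t x)).const_mul ϰ)).deriv
  have hP10 : deriv (fun y => laxP ϰ q r qx rx t y 1 0) x =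
      2 * ϰ ^ 3 * rx t x - Complex.I * ϰ * rxx t x +
        ϰ * (qx t x * (r t x * r t x) + q t x * (rx t x * r t x + r t x * rx t x)) := by
    have e : (fun y => laxP ϰ q r qx rx t y 1 0) =
        fun y => 2 * ϰ ^ 3 * r t y - Complex.I * ϰ * rx t y + ϰ * (q t y * (r t y * r t y)) := by
      funext y; simp [laxP]; ring
    rw [e]
    exact ((((hrx t x).const_mul (2 * ϰ ^ 3)).sub ((hrxx t x).const_mul (Complex.I * ϰ))).add
      (((hqx t x).mul ((hrx t x).mul (hrx t x))).const_mul ϰ)).deriv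
  ext i j
  fin_cases i <;> fin_cases j <;>
    simp only [Fin.zero_eta, Fin.mk_one, Matrix.sub_apply, Matrix.mul_apply, Matrix.of_apply,
      Fin.sum_univ_two, hA00, hA01, hA10, hA11, hP00, hP01, hP10, hP11] <;>
    simp only [laxA, laxP, Matrix.of_apply, Matrix.cons_val', Matrix.cons_val_zero,
      Matrix.cons_val_one, Matrix.head_cons, Matrix.empty_val', Matrix.cons_val_fin_one,
      Matrix.head_fin_const] <;>
    ring_nf <;> simp [Complex.I_sq] <;> ring_nf
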